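/- Let E = (C,V,A,w,k) be a weighted ABC election, let c_1,…,c_k be the k candidates selected by AV labeled in order of selection (non-increasing approval weight), let ℓ ∈ {1,…,k}, and let x = w(V_{c_{k−ℓ+1}}) be the approval weight of candidate c_{k−ℓ+1}. Then the minimum weight of an ℓ-replacement that is successful for AV equals x; in particular, the ℓ-replacement consisting of a single new voter of weight x who approves all ℓ new candidates is successful and has minimum weight among all successful ℓ-replacements. -/
import Mathlib


open Finset

variable {Cand Voter : Type} [DecidableEq Cand] [DecidableEq Voter]

/-- The approval weight of candidate `c`: the total weight of the voters in `V` approving `c`. -/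
def apprWeight (V : Finset Voter) (A : Voter → Finset Cand) (w : Voter → ℝ) (c : Cand) : ℝ :=
  ∑ v ∈ V.filter fun v => c ∈ A v, w v

/-- `W` is a committee that Approval Voting may select in the election `(C,V,A,w,k)`:
it consists of `k` candidates with highest approval weight. -/
def IsAVCommittee (C : Finset Cand) (V : Finset Voter) (A : Voter → Finset Cand)
    (w : Voter → ℝ) (k : ℕ) (W : Finset Cand) : Prop :=
  W ⊆ C ∧ W.card = k ∧
    ∀ c ∈ W, ∀ c' ∈ C \ W, apprWeight V A w c' ≤ apprWeight V A w c

/-- The `ℓ`-replacement `(C',V',A',w')` is successful for AV on `(C,V,A,w,k)`: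
with ties broken in favor of the candidates in `C'`, AV run on the extended election
selects all candidates of `C'`, i.e. some AV committee of the extended election contains `C'`. -/
def AVSuccessful (C : Finset Cand) (V : Finset Voter) (A : Voter → Finset Cand)
    (w : Voter → ℝ) (k : ℕ) (C' : Finset Cand) (V' : Finset Voter)
    (A' : Voter → Finset Cand) (w' : Voter → ℝ) : Prop :=
  ∃ W : Finset Cand,
    IsAVCommittee (C ∪ C') (V ∪ V') (fun v => if v ∈ V then A v else A' v)
      (fun v => if v ∈ V then w v else w' v) k W ∧ C' ⊆ W

lemma apprWeight_congr (V : Finset Voter) (A₁ A₂ : Voter → Finset Cand) (w₁ w₂ : Voter → ℝ)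
    (hA : ∀ v ∈ V, A₁ v = A₂ v) (hw : ∀ v ∈ V, w₁ v = w₂ v) (d : Cand) :
    apprWeight V A₁ w₁ d = apprWeight V A₂ w₂ d := by
  unfold apprWeight
  rw [Finset.filter_congr (fun v hv => by rw [hA v hv])]
  exact Finset.sum_congr rfl fun v hv => hw v (Finset.mem_of_mem_filter v hv)

lemma apprWeight_union (V₁ V₂ : Finset Voter) (h : Disjoint V₁ V₂)
    (A : Voter → Finset Cand) (w : Voter → ℝ) (d : Cand) :
    apprWeight (V₁ ∪ V₂) A w d = apprWeight V₁ A w d + apprWeight V₂ A w d := by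
  unfold apprWeight
  rw [filter_union, sum_union (disjoint_filter_filter h)]

lemma apprWeight_eq_zero (V : Finset Voter) (A : Voter → Finset Cand) (w : Voter → ℝ) (d : Cand)
    (h : ∀ v ∈ V, d ∉ A v) : apprWeight V A w d = 0 := by
  unfold apprWeight
  rw [filter_false_of_mem h, sum_empty]

lemma apprWeight_le_sum (V : Finset Voter) (A : Voter → Finset Cand) (w : Voter → ℝ) (d : Cand)
    (hw : ∀ v ∈ V, 0 ≤ w v) : apprWeight V A w d ≤ ∑ v ∈ V, w v :=
  sum_le_sum_of_subset_of_nonneg (filter_subset _ _) (fun v hv _ => hw v hv)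

lemma card_filter_fin_lt (k l : ℕ) (h : l ≤ k) :
    ((Finset.univ.filter (fun i : Fin k => i.val < l)).card = l) := by
  have : (Finset.univ.filter (fun i : Fin k => i.val < l)) =
      (Finset.univ : Finset (Fin l)).map ⟨Fin.castLE h, Fin.castLE_injective h⟩ := by
    ext i
    simp only [mem_filter, mem_univ, true_and, mem_map, Function.Embedding.coeFn_mk]
    constructor
    · intro hi; exact ⟨⟨i.val, hi⟩, by ext; simp⟩
    · rintro ⟨j, rfl⟩; exact j.isLt
  rw [this, card_map, card_univ, Fintype.card_fin]

/-- Let `x` be the approval weight of the `(k-ℓ+1)`-th candidate selected by AV. Then the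
minimum weight of an `ℓ`-replacement that is successful for AV equals `x`: the `ℓ`-replacement
consisting of a single new voter `v₀` of weight `x` who approves all `ℓ` new candidates is
successful and has weight `x`, and every successful `ℓ`-replacement has weight at least `x`. -/
theorem av_replacement_min_cost
    (C : Finset Cand) (V : Finset Voter) (A : Voter → Finset Cand) (w : Voter → ℝ) (k : ℕ)
    (hA : ∀ v ∈ V, A v ⊆ C) (hw : ∀ v ∈ V, 0 ≤ w v) (hk : k ≤ C.card)
    (c : Fin k → Cand) (hcinj : Function.Injective c) (hcmem : ∀ i, c i ∈ C)
    (hcmono : ∀ i j : Fin k, i ≤ j → apprWeight V A w (c j) ≤ apprWeight V A w (c i))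
    (hcAV : IsAVCommittee C V A w k (Finset.univ.image c))
    (ℓ : ℕ) (hℓ1 : 1 ≤ ℓ) (hℓk : ℓ ≤ k)
    (x : ℝ) (hx : x = apprWeight V A w (c ⟨k - ℓ, by omega⟩))
    -- the single-voter witness replacement
    (C' : Finset Cand) (hC'card : C'.card = ℓ) (hCC' : Disjoint C C')
    (v₀ : Voter) (hv₀ : v₀ ∉ V)
    (A' : Voter → Finset Cand) (w' : Voter → ℝ)
    (hA'v₀ : A' v₀ = C') (hw'v₀ : w' v₀ = x) :
    (AVSuccessful C V A w k C' {v₀} A' w' ∧ ∑ v ∈ ({v₀} : Finset Voter), w' v = x) ∧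
    (∀ (C'' : Finset Cand) (V'' : Finset Voter) (A'' : Voter → Finset Cand) (w'' : Voter → ℝ),
      C''.card = ℓ → Disjoint C C'' → Disjoint V V'' →
      (∀ v ∈ V'', A'' v ⊆ C'') → (∀ v ∈ V'', 0 ≤ w'' v) →
      AVSuccessful C V A w k C'' V'' A'' w'' →
      x ≤ ∑ v ∈ V'', w'' v) := by
  have hkl : k - ℓ < k := by omega
  set i0 : Fin k := ⟨k - ℓ, hkl⟩ with hi0
  constructor
  · constructor
    · -- the witness replacement is successful
      set Ae : Voter → Finset Cand := fun v => if v ∈ V then A v else A' v with hAe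
      set we : Voter → ℝ := fun v => if v ∈ V then w v else w' v with hwe
      have hdisj1 : Disjoint V ({v₀} : Finset Voter) := by
        simp [Finset.disjoint_singleton_right, hv₀]
      have hVcongrA : ∀ v ∈ V, Ae v = A v := fun v hv => by simp [hAe, hv]
      have hVcongrw : ∀ v ∈ V, we v = w v := fun v hv => by simp [hwe, hv]
      -- extended approval weight of an old candidate
      have hextC : ∀ d ∈ C, apprWeight (V ∪ {v₀}) Ae we d = apprWeight V A w d := by
        intro d hd
        rw [apprWeight_union _ _ hdisj1,
          apprWeight_congr V Ae A we w hVcongrA hVcongrw,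
          apprWeight_eq_zero {v₀} Ae we d (fun v hv => by
            have hv' : v = v₀ := Finset.mem_singleton.1 hv
            subst hv'
            have hAev : Ae v = C' := by simp [hAe, hv₀, hA'v₀]
            rw [hAev]
            exact Finset.disjoint_left.1 hCC' hd), add_zero]
      -- extended approval weight of a new candidate
      have hextC' : ∀ d ∈ C', apprWeight (V ∪ {v₀}) Ae we d = x := by
        intro d hd
        have hdnC : d ∉ C := Finset.disjoint_right.1 hCC' hd
        rw [apprWeight_union _ _ hdisj1,
          apprWeight_congr V Ae A we w hVcongrA hVcongrw,
          apprWeight_eq_zero V A w d (fun v hv hdv => hdnC (hA v hv hdv))]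
        have : apprWeight {v₀} Ae we d = x := by
          unfold apprWeight
          rw [Finset.filter_singleton, if_pos (by simp [hAe, hv₀, hA'v₀, hd]),
            Finset.sum_singleton]
          simp [hwe, hv₀, hw'v₀]
        rw [this, zero_add]
      -- the committee: C' together with the top k-ℓ old candidates
      set T : Finset Cand := (Finset.univ.filter (fun i : Fin k => i.val < k - ℓ)).image c
        with hT
      have hTsub : T ⊆ C := by
        intro d hd
        rw [hT, Finset.mem_image] at hd
        obtain ⟨i, _, rfl⟩ := hd
        exact hcmem i
      have hTcard : T.card = k - ℓ := by
        rw [hT, Finset.card_image_of_injective _ hcinj, card_filter_fin_lt k (k - ℓ) (by omega)]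
      have hdisjT : Disjoint C' T := (hCC'.symm.mono_right hTsub)
      refine ⟨C' ∪ T, ⟨?_, ?_, ?_⟩, Finset.subset_union_left⟩
      · exact Finset.union_subset (Finset.subset_union_right)
          (hTsub.trans Finset.subset_union_left)
      · rw [Finset.card_union_of_disjoint hdisjT, hC'card, hTcard]; omega
      · intro d hd e he
        rw [Finset.mem_sdiff] at he
        obtain ⟨heCC, heW⟩ := he
        have heC' : e ∉ C' := fun h => heW (Finset.mem_union_left _ h)
        have heT : e ∉ T := fun h => heW (Finset.mem_union_right _ h)
        have heC : e ∈ C := by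
          rcases Finset.mem_union.1 heCC with h | h
          · exact h
          · exact absurd h heC'
        -- every loser has old approval weight at most x
        have hex : apprWeight V A w e ≤ x := by
          by_cases him : e ∈ Finset.univ.image c
          · rw [Finset.mem_image] at him
            obtain ⟨j, _, rfl⟩ := him
            have hj : ¬ (j.val < k - ℓ) := fun h =>
              heT (by rw [hT]; exact Finset.mem_image_of_mem c (by simp [h]))
            have : i0 ≤ j := by rw [Fin.le_def]; simp [hi0]; omega
            rw [hx]; exact hcmono i0 j this
          · rw [hx]
            exact hcAV.2.2 (c i0) (Finset.mem_image_of_mem c (Finset.mem_univ i0)) e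
              (Finset.mem_sdiff.2 ⟨heC, him⟩)
        rw [hextC e heC]
        rcases Finset.mem_union.1 hd with hd | hd
        · rw [hextC' d hd]; exact hex
        · rw [hT, Finset.mem_image] at hd
          obtain ⟨i, hi, rfl⟩ := hd
          rw [hextC (c i) (hcmem i)]
          refine hex.trans ?_
          rw [hx]
          refine hcmono i i0 ?_
          rw [Fin.le_def]
          simp only [Finset.mem_filter, Finset.mem_univ, true_and] at hi
          simp [hi0]; omega
    · simp [hw'v₀]
  · -- lower bound
    intro C'' V'' A'' w'' hcard hdisjC hdisjV hA'' hw'' hsucc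
    obtain ⟨W, ⟨hWsub, hWcard, hWtop⟩, hC''W⟩ := hsucc
    set Ae : Voter → Finset Cand := fun v => if v ∈ V then A v else A'' v with hAe
    set we : Voter → ℝ := fun v => if v ∈ V then w v else w'' v with hwe
    have hVcongrA : ∀ v ∈ V, Ae v = A v := fun v hv => by simp [hAe, hv]
    have hVcongrw : ∀ v ∈ V, we v = w v := fun v hv => by simp [hwe, hv]
    have hV''congrA : ∀ v ∈ V'', Ae v = A'' v := fun v hv => by
      simp [hAe, Finset.disjoint_right.1 hdisjV hv]
    have hV''congrw : ∀ v ∈ V'', we v = w'' v := fun v hv => by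
      simp [hwe, Finset.disjoint_right.1 hdisjV hv]
    have hextC : ∀ d ∈ C, apprWeight (V ∪ V'') Ae we d = apprWeight V A w d := by
      intro d hd
      rw [apprWeight_union _ _ hdisjV,
        apprWeight_congr V Ae A we w hVcongrA hVcongrw,
        apprWeight_congr V'' Ae A'' we w'' hV''congrA hV''congrw,
        apprWeight_eq_zero V'' A'' w'' d (fun v hv hdv =>
          Finset.disjoint_left.1 hdisjC hd (hA'' v hv hdv)), add_zero]
    have hextC'' : ∀ d ∈ C'', apprWeight (V ∪ V'') Ae we d ≤ ∑ v ∈ V'', w'' v := by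
      intro d hd
      have hdnC : d ∉ C := Finset.disjoint_right.1 hdisjC hd
      rw [apprWeight_union _ _ hdisjV,
        apprWeight_congr V Ae A we w hVcongrA hVcongrw,
        apprWeight_congr V'' Ae A'' we w'' hV''congrA hV''congrw,
        apprWeight_eq_zero V A w d (fun v hv hdv => hdnC (hA v hv hdv)), zero_add]
      exact apprWeight_le_sum V'' A'' w'' d hw''
    -- find a top candidate not in W
    set S : Finset Cand := (Finset.univ.filter (fun i : Fin k => i.val ≤ k - ℓ)).image c
      with hS
    have hScard : S.card = k - ℓ + 1 := by
      rw [hS, Finset.card_image_of_injective _ hcinj]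
      have : (Finset.univ.filter (fun i : Fin k => i.val ≤ k - ℓ)) =
          (Finset.univ.filter (fun i : Fin k => i.val < k - ℓ + 1)) := by
        apply Finset.filter_congr; intro i _; constructor <;> omega
      rw [this, card_filter_fin_lt k (k - ℓ + 1) (by omega)]
    have hSsubC : S ⊆ C := by
      intro d hd
      rw [hS, Finset.mem_image] at hd
      obtain ⟨i, _, rfl⟩ := hd
      exact hcmem i
    have hnotsub : ¬ S ⊆ W := by
      intro hsub
      have hSWC : S ⊆ W ∩ C := Finset.subset_inter hsub hSsubC
      have hdisjWC : Disjoint (W ∩ C) C'' :=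
        hdisjC.mono_left Finset.inter_subset_right
      have hsub2 : (W ∩ C) ∪ C'' ⊆ W :=
        Finset.union_subset Finset.inter_subset_left hC''W
      have := Finset.card_le_card hsub2
      rw [Finset.card_union_of_disjoint hdisjWC, hcard, hWcard] at this
      have h1 : S.card ≤ (W ∩ C).card := Finset.card_le_card hSWC
      omega
    obtain ⟨e, heS, heW⟩ := Finset.not_subset.1 hnotsub
    rw [hS, Finset.mem_image] at heS
    obtain ⟨j, hj, rfl⟩ := heS
    simp only [Finset.mem_filter, Finset.mem_univ, true_and] at hj
    obtain ⟨c'', hc''⟩ := Finset.card_pos.1 (by rw [hcard]; omega : 0 < C''.card)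
    have hkey := hWtop c'' (hC''W hc'') (c j)
      (Finset.mem_sdiff.2 ⟨Finset.mem_union_left _ (hcmem j), heW⟩)
    rw [hextC (c j) (hcmem j)] at hkey
    have h1 : x ≤ apprWeight V A w (c j) := by
      rw [hx]
      refine hcmono j i0 ?_
      rw [Fin.le_def]; simp [hi0]; omega
    exact h1.trans (hkey.trans (hextC'' c'' hc''))
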